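/- arXiv:2403.13979 — 4 statements merged into one kernel-verified Lean document; each statement's English description precedes it below -/
import Mathlib

section
/- Let α be a type and Z ⊆ α a set of letters. In the free monoid FreeMonoid α, the two-sided ideal generated by the set {(of z) * (of z') : z, z' ∈ Z} of all pairwise products of letters from Z (the set of words containing two adjacent letters from Z) is an associative two-sided ideal. -/
/-- A subset `Q` of a monoid `M` is a two-sided ideal if it absorbs
multiplication by arbitrary elements on both sides. -/
def IsMonoidIdeal {M : Type*} [Monoid M] (Q : Set M) : Prop :=
  ∀ q ∈ Q, ∀ m : M, m * q ∈ Q ∧ q * m ∈ Q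

/-- A two-sided ideal `Q` is prime if `x * y ∈ Q` implies `x ∈ Q` or `y ∈ Q`. -/
def IsPrimeMonoidIdeal {M : Type*} [Monoid M] (Q : Set M) : Prop :=
  IsMonoidIdeal Q ∧ ∀ x y : M, x * y ∈ Q → x ∈ Q ∨ y ∈ Q

/-- A two-sided ideal `Q` is associative if for all `a b c ≠ 1`,
`a * b * c ∈ Q` implies `a * b ∈ Q` or `b * c ∈ Q`. -/
def IsAssociativeMonoidIdeal {M : Type*} [Monoid M] (Q : Set M) : Prop :=
  IsMonoidIdeal Q ∧ ∀ a b c : M, a ≠ 1 → b ≠ 1 → c ≠ 1 →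
    a * b * c ∈ Q → a * b ∈ Q ∨ b * c ∈ Q

private lemma key_list {α : Type*} {a b c u v : List α} {z z' : α} (hb : b ≠ [])
    (h : a ++ b ++ c = u ++ z :: z' :: v) :
    (∃ u' v' : List α, a ++ b = u' ++ z :: z' :: v') ∨
    (∃ u' v' : List α, b ++ c = u' ++ z :: z' :: v') := by
  have hbl : 1 ≤ b.length := List.length_pos_iff.2 hb
  by_cases hle : u.length + 2 ≤ a.length + b.length
  · left
    have h1 : (u ++ [z, z']) <+: (a ++ b ++ c) := ⟨v, by simpa using h.symm⟩
    have h2 : (a ++ b) <+: (a ++ b ++ c) := ⟨c, rfl⟩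
    have hpre : (u ++ [z, z']) <+: (a ++ b) :=
      List.prefix_of_prefix_length_le h1 h2 (by simpa using hle)
    obtain ⟨t, ht⟩ := hpre
    exact ⟨u, t, by rw [← ht]; simp⟩
  · right
    have h1 : a <+: (a ++ b ++ c) := ⟨b ++ c, by simp⟩
    have h2 : u <+: (a ++ b ++ c) := ⟨z :: z' :: v, h.symm⟩
    have ha : a <+: u := List.prefix_of_prefix_length_le h1 h2 (by omega)
    obtain ⟨u', rfl⟩ := ha
    refine ⟨u', v, ?_⟩
    have h' : a ++ (b ++ c) = a ++ (u' ++ z :: z' :: v) := by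
      simpa [List.append_assoc] using h
    exact List.append_cancel_left h'

private lemma mem_iff {α : Type*} {Z : Set α} {w : FreeMonoid α} :
    (w ∈ {w : FreeMonoid α | ∃ u v : FreeMonoid α, ∃ z ∈ Z, ∃ z' ∈ Z,
        w = u * (FreeMonoid.of z * FreeMonoid.of z') * v}) ↔
    ∃ z ∈ Z, ∃ z' ∈ Z, ∃ u' v' : List α,
      FreeMonoid.toList w = u' ++ z :: z' :: v' := by
  constructor
  · rintro ⟨u, v, z, hz, z', hz', rfl⟩
    exact ⟨z, hz, z', hz', FreeMonoid.toList u, FreeMonoid.toList v, by simp⟩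
  · rintro ⟨z, hz, z', hz', u', v', hw⟩
    refine ⟨FreeMonoid.ofList u', FreeMonoid.ofList v', z, hz, z', hz', ?_⟩
    apply FreeMonoid.toList.injective
    simp [hw]

/-- In a free monoid, the two-sided ideal generated by all pairwise products
of letters from `Z` is an associative ideal. -/
theorem ideal_of_letter_pairs_is_associative {α : Type*} (Z : Set α) :
    IsAssociativeMonoidIdeal
      {w : FreeMonoid α | ∃ u v : FreeMonoid α, ∃ z ∈ Z, ∃ z' ∈ Z,
        w = u * (FreeMonoid.of z * FreeMonoid.of z') * v} := by
  constructor
  · rintro q ⟨u, v, z, hz, z', hz', rfl⟩ m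
    exact ⟨⟨m * u, v, z, hz, z', hz', by simp [mul_assoc]⟩,
      ⟨u, v * m, z, hz, z', hz', by simp [mul_assoc]⟩⟩
  · intro a b c _ hb _ habc
    rw [mem_iff] at habc
    obtain ⟨z, hz, z', hz', u', v', h⟩ := habc
    have hb' : FreeMonoid.toList b ≠ [] := fun hnil => hb (by
      apply FreeMonoid.toList.injective; simpa using hnil)
    have h' : FreeMonoid.toList a ++ FreeMonoid.toList b ++ FreeMonoid.toList c
        = u' ++ z :: z' :: v' := by simpa using h
    rcases key_list hb' h' with ⟨u'', v'', h2⟩ | ⟨u'', v'', h2⟩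
    · exact Or.inl (mem_iff.2 ⟨z, hz, z', hz', u'', v'', by simpa using h2⟩)
    · exact Or.inr (mem_iff.2 ⟨z, hz, z', hz', u'', v'', by simpa using h2⟩)
end

section
/- Let α be a type and F ⊆ α × α an arbitrary set of pairs of letters. In the free monoid FreeMonoid α, the two-sided ideal generated by the set {(of a) * (of b) : (a, b) ∈ F}, namely the set of all words containing an adjacent pair of letters belonging to F, is an associative two-sided ideal. -/
private lemma key_split {α : Type*} (u v a b c : List α) (x y : α) (hb : b ≠ [])
    (h : u ++ x :: y :: v = a ++ b ++ c) :
    (∃ u' v', a ++ b = u' ++ x :: y :: v') ∨ (∃ u' v', b ++ c = u' ++ x :: y :: v') := by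
  rcases le_or_gt (u.length + 2) (a.length + b.length) with h1 | h1
  · left
    refine ⟨u, v.take (a.length + b.length - u.length - 2), ?_⟩
    have : a ++ b = ((a ++ b) ++ c).take (a.length + b.length) := by
      rw [← List.length_append, List.take_left]
    rw [this, ← h, List.take_append, List.take_of_length_le (by omega)]
    congr 1
    rcases Nat.exists_eq_add_of_le h1 with ⟨k, hk⟩
    have h2 : a.length + b.length - u.length = k + 2 := by omega
    rw [h2, List.take_succ_cons, List.take_succ_cons, Nat.add_sub_cancel]
  · right
    have hla : a.length ≤ u.length := by
      have : 1 ≤ b.length := List.length_pos_iff.mpr hb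
      omega
    refine ⟨u.drop a.length, v, ?_⟩
    have : b ++ c = (a ++ (b ++ c)).drop a.length := by rw [List.drop_left]
    rw [List.append_assoc] at h
    rw [this, ← h, List.drop_append, Nat.sub_eq_zero_of_le hla, List.drop_zero]

/-- In a free monoid, for any set `F` of pairs of letters, the two-sided ideal
generated by the products `of a * of b` for `(a, b) ∈ F` is associative. -/
theorem ideal_of_pair_set_is_associative {α : Type*} (F : Set (α × α)) :
    IsAssociativeMonoidIdeal
      {w : FreeMonoid α | ∃ u v : FreeMonoid α, ∃ p ∈ F,
        w = u * (FreeMonoid.of p.1 * FreeMonoid.of p.2) * v} := by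
  constructor
  · rintro q ⟨u, v, p, hp, rfl⟩ m
    exact ⟨⟨m * u, v, p, hp, by simp [mul_assoc]⟩, ⟨u, v * m, p, hp, by simp [mul_assoc]⟩⟩
  · rintro a b c ha hb hc ⟨u, v, p, hp, h⟩
    have h' : u.toList ++ p.1 :: p.2 :: v.toList =
        a.toList ++ b.toList ++ c.toList := by
      have := congrArg FreeMonoid.toList h
      simpa [FreeMonoid.toList_mul, List.append_assoc] using this.symm
    have hb' : b.toList ≠ [] := by
      intro hbe
      exact hb (FreeMonoid.toList.injective (by simpa using hbe))
    rcases key_split _ _ _ _ _ _ _ hb' h' with ⟨u', v', hh⟩ | ⟨u', v', hh⟩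
    · left
      refine ⟨FreeMonoid.ofList u', FreeMonoid.ofList v', p, hp, ?_⟩
      apply FreeMonoid.toList.injective
      simp [FreeMonoid.toList_mul, hh]
    · right
      refine ⟨FreeMonoid.ofList u', FreeMonoid.ofList v', p, hp, ?_⟩
      apply FreeMonoid.toList.injective
      simp [FreeMonoid.toList_mul, hh]
end

section
/- Not every associative ideal is prime: in the monoid Multiplicative ℕ (the natural numbers under addition, written multiplicatively), the subset {n : 2 ≤ n} is an associative two-sided ideal but is not a prime ideal. -/
/-- In `Multiplicative ℕ`, the set of elements with additive value at least `2`
is an associative two-sided ideal that is not prime. -/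
theorem associative_not_prime_example :
    IsAssociativeMonoidIdeal {n : Multiplicative ℕ | 2 ≤ n.toAdd} ∧
    ¬ IsPrimeMonoidIdeal {n : Multiplicative ℕ | 2 ≤ n.toAdd} := by
  constructor
  · constructor
    · intro q hq m
      simp only [Set.mem_setOf_eq, toAdd_mul] at *
      omega
    · intro a b c ha hb hc habc
      have ha' : 1 ≤ a.toAdd := by
        rcases Nat.eq_zero_or_pos a.toAdd with h | h
        · exact absurd (toAdd_eq_zero.mp h) ha
        · exact h
      have hb' : 1 ≤ b.toAdd := by
        rcases Nat.eq_zero_or_pos b.toAdd with h | h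
        · exact absurd (toAdd_eq_zero.mp h) hb
        · exact h
      left
      simp only [Set.mem_setOf_eq, toAdd_mul]
      omega
  · rintro ⟨-, hp⟩
    have := hp (Multiplicative.ofAdd 1) (Multiplicative.ofAdd 1) (by simp)
    simp at this
end

section
/- The intersection of two associative (indeed prime) two-sided ideals need not be associative: in the free monoid FreeMonoid (Fin 3), the intersection of the two-sided ideal generated by {of 0} and the two-sided ideal generated by {of 1} is a two-sided ideal that is not associative. -/
lemma mem_factor_iff {α : Type*} (w : FreeMonoid α) (x : α) :
    (∃ u v : FreeMonoid α, w = u * FreeMonoid.of x * v) ↔ x ∈ FreeMonoid.toList w := by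
  constructor
  · rintro ⟨u, v, rfl⟩
    simp [FreeMonoid.toList_of]
  · intro h
    obtain ⟨s, t, hst⟩ := List.append_of_mem h
    exact ⟨FreeMonoid.ofList s, FreeMonoid.ofList t, by
      apply FreeMonoid.toList.injective
      simp [hst]⟩

/-- In `FreeMonoid (Fin 3)`, the intersection of the two-sided ideals generated
by the letters `0` and `1` respectively is a two-sided ideal that is not
associative. -/
theorem inter_of_prime_ideals_not_associative :
    IsMonoidIdeal
      ({w : FreeMonoid (Fin 3) | ∃ u v : FreeMonoid (Fin 3),
          w = u * FreeMonoid.of 0 * v} ∩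
       {w : FreeMonoid (Fin 3) | ∃ u v : FreeMonoid (Fin 3),
          w = u * FreeMonoid.of 1 * v}) ∧
    ¬ IsAssociativeMonoidIdeal
      ({w : FreeMonoid (Fin 3) | ∃ u v : FreeMonoid (Fin 3),
          w = u * FreeMonoid.of 0 * v} ∩
       {w : FreeMonoid (Fin 3) | ∃ u v : FreeMonoid (Fin 3),
          w = u * FreeMonoid.of 1 * v}) := by
  constructor
  · rintro q ⟨⟨u0, v0, rfl⟩, ⟨u1, v1, h1⟩⟩ m
    refine ⟨⟨⟨m * u0, v0, by simp [mul_assoc]⟩, ?_⟩, ⟨⟨u0, v0 * m, by simp [mul_assoc]⟩, ?_⟩⟩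
    · exact ⟨m * u1, v1, by rw [h1]; simp [mul_assoc]⟩
    · exact ⟨u1, v1 * m, by rw [h1]; simp [mul_assoc]⟩
  · rintro ⟨-, h⟩
    have hne : ∀ x : Fin 3, FreeMonoid.of x ≠ 1 := fun x h => by
      simpa using congrArg FreeMonoid.toList h
    have := h (FreeMonoid.of 0) (FreeMonoid.of 2) (FreeMonoid.of 1)
      (hne 0) (hne 2) (hne 1)
      ⟨(mem_factor_iff _ _).mpr (by decide), (mem_factor_iff _ _).mpr (by decide)⟩
    rcases this with ⟨-, h1⟩ | ⟨h0, -⟩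
    · exact absurd ((mem_factor_iff _ _).mp h1) (by decide)
    · exact absurd ((mem_factor_iff _ _).mp h0) (by decide)
end
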